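/- Let α_R, α_F ∈ [0,1), let R be the real 2×2 matrix with rows (1, −α_R) and (−α_F, 1), let T_D : ℝ ⇒ ℝ be a monotone set-valued operator, define T_NPN : ℝ² ⇒ ℝ² by T_NPN(v₁,v₂) := {R·(u₁,u₂) : u₁ ∈ T_D(v₁), u₂ ∈ T_D(v₂)}, and for r > 0 set T_{NPN,r} := T_NPN + (1/r)·id (graph {(v, w + (1/r)v) : (v,w) ∈ graph T_NPN}). Then T_{NPN,r} is (1/(2r), −r/2)-semimonotone: ⟨x − y, u − v⟩ ≥ (1/(2r))·‖x − y‖² − (r/2)·‖u − v‖² for all (x,u), (y,v) in the graph of T_{NPN,r}. -/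

import Mathlib

/-!
Write `d = x - y` and let `b` be the difference of the `T_NPN` parts of `u` and `v`. Expanding the
norms, the semimonotonicity inequality for `T_NPN + (1/r)·id` becomes `‖r b‖² ≤ 2 ‖d + r b‖²`.
Here `r b = R t` with `tᵢ = r (u'ᵢ - v'ᵢ)` for `u'ᵢ ∈ T_D(xᵢ)`, `v'ᵢ ∈ T_D(yᵢ)`, so `dᵢ tᵢ ≥ 0`.
Put `q = R t`. If `tᵢ qᵢ ≤ 0` then `|qᵢ| ≤ α |qⱼ|` (`α = α_R` resp. `α_F`, `j ≠ i`); as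
`α_R α_F < 1` this cannot hold for both coordinates unless `q = 0`. If `tᵢ qᵢ > 0` then `dᵢ qᵢ ≥ 0`.
Hence some coordinate `i` has both `dᵢ qᵢ ≥ 0` and `|qᵢ| = max |qⱼ|`, and then
`‖d + q‖² ≥ qᵢ² ≥ ‖q‖² / 2`.
-/

/-- The Ebers–Moll matrix with rows `(1, -αR)` and `(-αF, 1)`, applied to a vector of
`ℝ²` (with the Euclidean inner product and norm). -/
noncomputable def applyEM (aR aF : ℝ) (w : EuclideanSpace ℝ (Fin 2)) :
    EuclideanSpace ℝ (Fin 2) :=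
  (WithLp.equiv 2 (Fin 2 → ℝ)).symm
    ((Matrix.of ![![1, -aR], ![-aF, 1]]).mulVec (WithLp.equiv 2 (Fin 2 → ℝ) w))

/-- A set-valued operator `T_D : ℝ ⇒ ℝ` is monotone if `(u - v)(x - y) ≥ 0` whenever
`u ∈ T_D(x)` and `v ∈ T_D(y)`. -/
def MonotoneSetValued (TD : ℝ → Set ℝ) : Prop :=
  ∀ ⦃x u y v : ℝ⦄, u ∈ TD x → v ∈ TD y → (u - v) * (x - y) ≥ 0

/-- The Ebers–Moll transistor operator `T_NPN : ℝ² ⇒ ℝ²` built from the diode law `T_D`. -/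
noncomputable def TNPN (aR aF : ℝ) (TD : ℝ → Set ℝ) (v : EuclideanSpace ℝ (Fin 2)) :
    Set (EuclideanSpace ℝ (Fin 2)) :=
  {w | ∃ u₁ ∈ TD (v 0), ∃ u₂ ∈ TD (v 1),
    w = applyEM aR aF ((WithLp.equiv 2 (Fin 2 → ℝ)).symm ![u₁, u₂])}

/-- `T_NPN + (1/r)·id`, the transistor with leakage resistance `r`. -/
noncomputable def TNPNr (aR aF : ℝ) (TD : ℝ → Set ℝ) (r : ℝ)
    (v : EuclideanSpace ℝ (Fin 2)) : Set (EuclideanSpace ℝ (Fin 2)) :=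
  (fun w => w + (1 / r) • v) '' TNPN aR aF TD v

section EbersMoll

variable {aR aF t₁ t₂ : ℝ}

lemma abs_sub_mul_le_mul_abs_sub_mul (haR : 0 ≤ aR) (h : aR * aF ≤ 1)
    (ht : t₁ * (t₁ - aR * t₂) ≤ 0) : |t₁ - aR * t₂| ≤ aR * |t₂ - aF * t₁| := by
  rcases mul_nonpos_iff.mp ht with ⟨ht₁, hq₁⟩ | ⟨ht₁, hq₁⟩
  · calc |t₁ - aR * t₂| = -(t₁ - aR * t₂) := abs_of_nonpos hq₁
      _ ≤ aR * (t₂ - aF * t₁) := by nlinarith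
      _ ≤ aR * |t₂ - aF * t₁| := mul_le_mul_of_nonneg_left (le_abs_self _) haR
  · calc |t₁ - aR * t₂| = t₁ - aR * t₂ := abs_of_nonneg hq₁
      _ ≤ aR * -(t₂ - aF * t₁) := by nlinarith
      _ ≤ aR * |t₂ - aF * t₁| := mul_le_mul_of_nonneg_left (neg_le_abs _) haR

lemma mul_nonneg_of_mul_nonneg_of_mul_pos {d t q : ℝ} (hdt : 0 ≤ d * t) (htq : 0 < t * q) :
    0 ≤ d * q := by
  have ht : 0 < t ^ 2 := by
    rcases eq_or_ne t 0 with rfl | ht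
    · simp at htq
    · positivity
  exact nonneg_of_mul_nonneg_right (by nlinarith : 0 ≤ t ^ 2 * (d * q)) ht

lemma sq_add_sq_le_two_mul_sq_add_sq {d₁ d₂ : ℝ} (haR₀ : 0 ≤ aR) (haR₁ : aR < 1)
    (haF₀ : 0 ≤ aF) (haF₁ : aF < 1) (hd₁ : 0 ≤ d₁ * t₁) (hd₂ : 0 ≤ d₂ * t₂) :
    (t₁ - aR * t₂) ^ 2 + (t₂ - aF * t₁) ^ 2
      ≤ 2 * ((d₁ + (t₁ - aR * t₂)) ^ 2 + (d₂ + (t₂ - aF * t₁)) ^ 2) := by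
  have hRF : aR * aF < 1 := by nlinarith
  have habs₁ := abs_sub_mul_le_mul_abs_sub_mul (t₁ := t₁) (t₂ := t₂) haR₀ hRF.le
  have habs₂ := abs_sub_mul_le_mul_abs_sub_mul (aR := aF) (aF := aR) (t₁ := t₂) (t₂ := t₁)
    haF₀ (by linarith)
  set q₁ := t₁ - aR * t₂
  set q₂ := t₂ - aF * t₁
  rcases le_or_gt (t₁ * q₁) 0 with h₁ | h₁ <;> rcases le_or_gt (t₂ * q₂) 0 with h₂ | h₂
  · have hq₁ : |q₁| = 0 := by nlinarith [abs_nonneg q₁, abs_nonneg q₂, habs₁ h₁, habs₂ h₂]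
    have hq₂ : |q₂| = 0 := by nlinarith [abs_nonneg q₂, habs₂ h₂]
    rw [abs_eq_zero] at hq₁ hq₂
    rw [hq₁, hq₂]
    nlinarith [sq_nonneg d₁, sq_nonneg d₂]
  · have hq : q₁ ^ 2 ≤ q₂ ^ 2 := sq_le_sq.mpr (by nlinarith [abs_nonneg q₂, habs₁ h₁])
    nlinarith [mul_nonneg_of_mul_nonneg_of_mul_pos hd₂ h₂, sq_nonneg (d₁ + q₁), sq_nonneg d₂]
  · have hq : q₂ ^ 2 ≤ q₁ ^ 2 := sq_le_sq.mpr (by nlinarith [abs_nonneg q₁, habs₂ h₂])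
    nlinarith [mul_nonneg_of_mul_nonneg_of_mul_pos hd₁ h₁, sq_nonneg (d₂ + q₂), sq_nonneg d₁]
  · nlinarith [mul_nonneg_of_mul_nonneg_of_mul_pos hd₁ h₁,
      mul_nonneg_of_mul_nonneg_of_mul_pos hd₂ h₂, sq_nonneg d₁, sq_nonneg d₂]

end EbersMoll

lemma real_inner_add_one_div_smul_ge {E : Type*} [NormedAddCommGroup E] [InnerProductSpace ℝ E]
    {r : ℝ} (hr : 0 < r) {d b : E} (h : ‖r • b‖ ^ 2 ≤ 2 * ‖d + r • b‖ ^ 2) :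
    inner ℝ d (b + (1 / r) • d) ≥ 1 / (2 * r) * ‖d‖ ^ 2 - r / 2 * ‖b + (1 / r) • d‖ ^ 2 := by
  have hs : b + (1 / r) • d = (1 / r) • (d + r • b) := by
    rw [smul_add, smul_smul, one_div_mul_cancel hr.ne', one_smul, add_comm]
  have hpol : 2 * inner ℝ d (d + r • b) = ‖d‖ ^ 2 + ‖d + r • b‖ ^ 2 - ‖r • b‖ ^ 2 := by
    have := norm_sub_sq_real (d + r • b) d
    rw [add_sub_cancel_left, real_inner_comm] at this
    linarith
  rw [hs, inner_smul_right, norm_smul, mul_pow, Real.norm_eq_abs, abs_of_pos (by positivity)]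
  field_simp
  linarith

section Transistor

variable {aR aF : ℝ}

lemma applyEM_apply_zero (w : EuclideanSpace ℝ (Fin 2)) : applyEM aR aF w 0 = w 0 - aR * w 1 := by
  simp [applyEM, dotProduct, Fin.sum_univ_two, sub_eq_add_neg]

lemma applyEM_apply_one (w : EuclideanSpace ℝ (Fin 2)) : applyEM aR aF w 1 = w 1 - aF * w 0 := by
  simp [applyEM, dotProduct, Fin.sum_univ_two, sub_eq_add_neg, add_comm]

lemma norm_smul_sub_sq_le_of_mem_TNPN (haR : aR ∈ Set.Ico (0 : ℝ) 1)
    (haF : aF ∈ Set.Ico (0 : ℝ) 1) {TD : ℝ → Set ℝ} (hTD : MonotoneSetValued TD) {r : ℝ}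
    (hr : 0 ≤ r) {x y w w' : EuclideanSpace ℝ (Fin 2)} (hw : w ∈ TNPN aR aF TD x)
    (hw' : w' ∈ TNPN aR aF TD y) :
    ‖r • (w - w')‖ ^ 2 ≤ 2 * ‖(x - y) + r • (w - w')‖ ^ 2 := by
  obtain ⟨a₁, ha₁, a₂, ha₂, rfl⟩ := hw
  obtain ⟨b₁, hb₁, b₂, hb₂, rfl⟩ := hw'
  have key := sq_add_sq_le_two_mul_sq_add_sq (t₁ := r * (a₁ - b₁)) (t₂ := r * (a₂ - b₂))
    (d₁ := x 0 - y 0) (d₂ := x 1 - y 1) haR.1 haR.2 haF.1 haF.2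
    (by nlinarith [hTD ha₁ hb₁]) (by nlinarith [hTD ha₂ hb₂])
  simp only [EuclideanSpace.real_norm_sq_eq, Fin.sum_univ_two, PiLp.add_apply, PiLp.sub_apply,
    PiLp.smul_apply, smul_eq_mul, applyEM_apply_zero, applyEM_apply_one,
    WithLp.equiv_symm_apply, Matrix.cons_val_zero, Matrix.cons_val_one, Matrix.cons_val_fin_one]
  linear_combination key

end Transistor

theorem stmt_16 (aR aF : ℝ) (haR : aR ∈ Set.Ico (0 : ℝ) 1) (haF : aF ∈ Set.Ico (0 : ℝ) 1)
    (TD : ℝ → Set ℝ) (hTD : MonotoneSetValued TD) (r : ℝ) (hr : r > 0) :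
    ∀ ⦃x u y v : EuclideanSpace ℝ (Fin 2)⦄,
      u ∈ TNPNr aR aF TD r x → v ∈ TNPNr aR aF TD r y →
      (inner ℝ (x - y) (u - v) : ℝ) ≥ 1 / (2 * r) * ‖x - y‖ ^ 2 - r / 2 * ‖u - v‖ ^ 2 := by
  rintro x - y - ⟨w, hw, rfl⟩ ⟨w', hw', rfl⟩
  have hsplit : w + (1 / r) • x - (w' + (1 / r) • y) = (w - w') + (1 / r) • (x - y) := by
    rw [smul_sub]
    abel
  rw [hsplit]
  exact real_inner_add_one_div_smul_ge hr
    (norm_smul_sub_sq_le_of_mem_TNPN haR haF hTD hr.le hw hw')
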